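/- With the notation of the iterated convolution identity (fix an integer $k$, an integer $v_1 \geq 0$, and $1 \leq m \leq v_1+1$; set $g_l = x_{v_1+1-l}^{k} \prod_{t=1}^{v_1-l} \frac{x_t}{x_{v_1+1-l}}$, $h_1 = g_0$, and $h_{l+1} = \mathfrak{S}_{\{i\}, J}\big(h_l\, g_l \prod_{j \in J} \frac{1 - q^2 x_j / x_i}{1 - x_i / x_j}\big)$ with $i = v_1+1-l$, $J = \{v_1+2-l,\dots,v_1+1\}$, and $\mathfrak{S}_{\{i\},J}(f) = f + \sum_{j\in J}(i\,j)\cdot f$), the element $\frac{1}{[m]!}\, h_m$ of $\mathbb{C}(q)(x_1,\dots,x_{v_1+1})$ is a unit of the Laurent polynomial ring $\mathbb{C}[q^{\pm 1}, x_1^{\pm 1}, \dots, x_{v_1+1}^{\pm 1}]$; in particular $h_m$ is divisible by the $q$-factorial $[m]!$ in $\mathbb{C}[q^{\pm 1}, x_1^{\pm 1}, \dots, x_{v_1+1}^{\pm 1}]$. -/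

import Mathlib

namespace GenAux
open Finset Polynomial
variable {F : Type*} [Field F] {ι : Type*} [DecidableEq ι]

theorem lag_coeff (s : Finset ι) (v : ι → F) (hvs : Set.InjOn v s)
    (P : F[X]) (hP : P.degree < s.card) :
    ∑ i ∈ s, P.eval (v i) * Lagrange.nodalWeight s v i = P.coeff (s.card - 1) := by
  conv_rhs => rw [Lagrange.eq_interpolate hvs hP]
  rw [Lagrange.interpolate_apply, finset_sum_coeff]
  refine sum_congr rfl fun i hi => ?_
  have hb : (Lagrange.basis s v i).natDegree = s.card - 1 :=
    Lagrange.natDegree_basis hvs hi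
  have hlc : (Lagrange.basis s v i).leadingCoeff = Lagrange.nodalWeight s v i := by
    rw [Lagrange.basis, leadingCoeff_prod, Lagrange.nodalWeight]
    refine prod_congr rfl fun j hj => ?_
    have hne : v i ≠ v j := by
      rcases mem_erase.mp hj with ⟨hij, hj'⟩
      exact fun h => hij (hvs hi hj' h).symm
    rw [Lagrange.basisDivisor, leadingCoeff_mul, leadingCoeff_C,
      (monic_X_sub_C _).leadingCoeff, mul_one]
  rw [coeff_C_mul, ← hb, coeff_natDegree, hlc]

theorem key_sum (s : Finset ι) (y : ι → F) (hinj : Set.InjOn y s)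
    (h0 : ∀ i ∈ s, y i ≠ 0) (a : F) (ha : a ≠ 1) (hs : s.Nonempty) :
    ∑ i ∈ s, ∏ j ∈ s.erase i, ((y i - a * y j) * (y i - y j)⁻¹)
      = (1 - a ^ s.card) / (1 - a) := by
  classical
  set n := s.card with hn
  have hn1 : 1 ≤ n := card_pos.mpr hs
  set Fp : F[X] := Lagrange.nodal s (fun j => a * y j) with hFp
  set G : F[X] := Lagrange.nodal s y with hG
  set N : F[X] := Fp - C (a ^ n) * G with hN
  have hc0 : N.coeff 0 = 0 := by
    have h1 : Fp.coeff 0 = Fp.eval 0 := by simp [coeff_zero_eq_eval_zero]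
    have h2 : G.coeff 0 = G.eval 0 := by simp [coeff_zero_eq_eval_zero]
    have : Fp.eval 0 = a ^ n * G.eval 0 := by
      rw [hFp, hG, Lagrange.eval_nodal, Lagrange.eval_nodal, hn,
        Finset.pow_card_mul_prod]
      exact prod_congr rfl fun j hj => by ring
    rw [hN, coeff_sub, coeff_C_mul, h1, h2, this]
    ring
  set P : F[X] := N.divX with hP
  have hXP : X * P = N := by
    have := X_mul_divX_add N
    rwa [hc0, map_zero, add_zero] at this
  have hdegG : G.degree = n := Lagrange.degree_nodal
  have hdegFp : Fp.degree = n := Lagrange.degree_nodal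
  have hdegN : N.degree ≤ n := by
    refine le_trans (degree_sub_le _ _) ?_
    simp only [sup_le_iff]
    constructor
    · exact le_of_eq hdegFp
    · refine le_trans (degree_mul_le _ _) ?_
      rw [hdegG]
      refine le_trans (add_le_add_left degree_C_le _) (by simp)
  have hdegP : P.degree < (n : ℕ) := by
    by_cases hN0 : N = 0
    · simp [hP, hN0]
    · exact lt_of_lt_of_le (degree_divX_lt hN0) (by exact_mod_cast hdegN)
  have hlag := lag_coeff s y hinj P (by exact_mod_cast hdegP)
  -- evaluate P at nodes
  have hPeval : ∀ i ∈ s, P.eval (y i) = (1 - a) * ∏ j ∈ s.erase i, (y i - a * y j) := by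
    intro i hi
    have hNi : N.eval (y i) = (1 - a) * y i * ∏ j ∈ s.erase i, (y i - a * y j) := by
      have hGi : G.eval (y i) = 0 := Lagrange.eval_nodal_at_node hi
      have hFpi : Fp.eval (y i) = ∏ j ∈ s, (y i - a * y j) := by
        rw [hFp, Lagrange.eval_nodal]
      rw [hN, eval_sub, eval_mul, eval_C, hGi, mul_zero, sub_zero, hFpi,
        ← mul_prod_erase _ _ hi]
      ring
    have h2 := congrArg (Polynomial.eval (y i)) hXP
    rw [eval_mul, eval_X, hNi] at h2
    have h3 : y i * P.eval (y i)
        = y i * ((1 - a) * ∏ j ∈ s.erase i, (y i - a * y j)) := by rw [h2]; ring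
    exact mul_left_cancel₀ (h0 i hi) h3
  have hcoeff : P.coeff (n - 1) = 1 - a ^ n := by
    have h1 : P.coeff (n - 1) = N.coeff n := by
      rw [hP, coeff_divX]; congr 1; omega
    have hFpc : Fp.coeff n = 1 := by
      have : Fp.Monic := Lagrange.nodal_monic
      have hnat : Fp.natDegree = n := Lagrange.natDegree_nodal
      rw [← hnat]; exact this.coeff_natDegree
    have hGc : G.coeff n = 1 := by
      have : G.Monic := Lagrange.nodal_monic
      have hnat : G.natDegree = n := Lagrange.natDegree_nodal
      rw [← hnat]; exact this.coeff_natDegree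
    rw [h1, hN, coeff_sub, coeff_C_mul, hFpc, hGc, mul_one]
  rw [hcoeff] at hlag
  have hsum : ∑ i ∈ s, P.eval (y i) * Lagrange.nodalWeight s y i
      = (1 - a) * ∑ i ∈ s, ∏ j ∈ s.erase i, ((y i - a * y j) * (y i - y j)⁻¹) := by
    rw [mul_sum]
    refine sum_congr rfl fun i hi => ?_
    rw [hPeval i hi, Lagrange.nodalWeight, prod_mul_distrib]
    ring
  rw [hsum] at hlag
  rw [eq_div_iff (sub_ne_zero.mpr (Ne.symm ha))]
  rw [← hlag]; ring

theorem conv_sum (s : Finset ι) (y : ι → F) (hinj : Set.InjOn y s)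
    (h0 : ∀ i ∈ s, y i ≠ 0) (a : F) (ha : a ≠ 1) (hs : s.Nonempty) :
    ∑ i ∈ s, (y i) ^ s.card * ∏ j ∈ s.erase i, ((1 - a * y j / y i) / (1 - y i / y j))
      = (-1) ^ (s.card - 1) * (∏ j ∈ s, y j) * ((1 - a ^ s.card) / (1 - a)) := by
  classical
  have hterm : ∀ i ∈ s,
      (y i) ^ s.card * ∏ j ∈ s.erase i, ((1 - a * y j / y i) / (1 - y i / y j))
        = ((-1) ^ (s.card - 1) * (∏ j ∈ s, y j)) *
            ∏ j ∈ s.erase i, ((y i - a * y j) * (y i - y j)⁻¹) := by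
    intro i hi
    have hcard : (s.erase i).card = s.card - 1 := card_erase_of_mem hi
    have hyi := h0 i hi
    have hfac : ∀ j ∈ s.erase i,
        (1 - a * y j / y i) / (1 - y i / y j)
          = ((y i - a * y j) * (y i - y j)⁻¹) * ((-1) * y j / y i) := by
      intro j hj
      rcases mem_erase.mp hj with ⟨hij, hjs⟩
      have hyj := h0 j hjs
      have hne : y i - y j ≠ 0 := sub_ne_zero.mpr fun h => hij (hinj hjs hi h.symm)
      have hne2 : y j - y i ≠ 0 := sub_ne_zero.mpr fun h => hij (hinj hjs hi h)
      have e2 : 1 - y i / y j = (y j - y i) / y j := by field_simp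
      have hd : (1 : F) - y i / y j ≠ 0 := by
        rw [e2]; exact div_ne_zero hne2 hyj
      rw [div_eq_iff hd]
      field_simp
      ring
    rw [prod_congr rfl hfac, prod_mul_distrib]
    have h2 : ∏ j ∈ s.erase i, ((-1 : F) * y j / y i)
        = (-1) ^ (s.card - 1) * (∏ j ∈ s.erase i, y j) * ((y i)⁻¹) ^ (s.card - 1) := by
      simp_rw [div_eq_mul_inv]
      rw [prod_mul_distrib, prod_mul_distrib, prod_const, prod_const, hcard]
    have hyip : (y i) ^ s.card = y i * y i ^ (s.card - 1) := by
      rw [← pow_succ']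
      congr 1
      have : 1 ≤ s.card := card_pos.mpr ⟨i, hi⟩
      omega
    have hc : y i ^ (s.card - 1) * ((y i)⁻¹) ^ (s.card - 1) = 1 := by
      rw [← mul_pow, mul_inv_cancel₀ hyi, one_pow]
    rw [h2, hyip]
    calc (y i * y i ^ (s.card - 1)) *
          ((∏ j ∈ s.erase i, ((y i - a * y j) * (y i - y j)⁻¹)) *
            ((-1) ^ (s.card - 1) * (∏ j ∈ s.erase i, y j) * ((y i)⁻¹) ^ (s.card - 1)))
        = ((-1) ^ (s.card - 1) * (y i * ∏ j ∈ s.erase i, y j)) *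
            (y i ^ (s.card - 1) * ((y i)⁻¹) ^ (s.card - 1)) *
            ∏ j ∈ s.erase i, ((y i - a * y j) * (y i - y j)⁻¹) := by ring
      _ = ((-1) ^ (s.card - 1) * (∏ j ∈ s, y j)) *
            ∏ j ∈ s.erase i, ((y i - a * y j) * (y i - y j)⁻¹) := by
          rw [hc, mul_one, mul_prod_erase _ _ hi]
  rw [sum_congr rfl hterm, ← mul_sum, key_sum s y hinj h0 a ha hs]

end GenAux

set_option synthInstance.maxHeartbeats 1000000
set_option maxHeartbeats 1000000


open Finset MvPolynomial

/-- The field `ℂ(q)(x₁, …, x_{v₁+1})` of rational functions over `ℂ(q)`. -/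
noncomputable abbrev Fx (v₁ : ℕ) : Type :=
  FractionRing (MvPolynomial (Fin (v₁ + 1)) (RatFunc ℂ))

/-- The variable `x_{i+1}` (`0`-indexed: `x i`) viewed in `ℂ(q)(x₁, …, x_{v₁+1})`. -/
noncomputable def xv {v₁ : ℕ} (i : Fin (v₁ + 1)) : Fx v₁ :=
  algebraMap (MvPolynomial (Fin (v₁ + 1)) (RatFunc ℂ)) (Fx v₁) (X i)

/-- The indeterminate `q` viewed in `ℂ(q)(x₁, …, x_{v₁+1})`. -/
noncomputable def qx {v₁ : ℕ} : Fx v₁ :=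
  algebraMap (MvPolynomial (Fin (v₁ + 1)) (RatFunc ℂ)) (Fx v₁) (C RatFunc.X)

/-- The action of a permutation on `ℂ(q)(x₁, …, x_{v₁+1})`, permuting the variables. -/
noncomputable def pAct {v₁ : ℕ} (σ : Equiv.Perm (Fin (v₁ + 1))) : Fx v₁ ≃+* Fx v₁ :=
  IsFractionRing.ringEquivOfRingEquiv (renameEquiv (RatFunc ℂ) σ).toRingEquiv

/-- The quantum integer `[r] = (q^r - q^{-r})/(q - q^{-1})` in `ℂ(q)(x₁, …, x_{v₁+1})`. -/
noncomputable def qInt (v₁ : ℕ) (r : ℕ) : Fx v₁ :=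
  (qx ^ (r : ℤ) - qx ^ (-(r : ℤ))) / (qx - qx⁻¹)

/-- The quantum factorial `[m]! = [1][2]⋯[m]` in `ℂ(q)(x₁, …, x_{v₁+1})`. -/
noncomputable def qFact (v₁ : ℕ) (m : ℕ) : Fx v₁ :=
  ∏ r ∈ Finset.Icc 1 m, qInt v₁ r

/-- The element `g_l = x_{v₁+1-l}^k ∏_{t=1}^{v₁-l} x_t / x_{v₁+1-l}`
(in `1`-indexed paper notation; the class `[𝓔_{1,v^{(l)},k}]`). -/
noncomputable def gEl (v₁ : ℕ) (k : ℤ) (l : ℕ) : Fx v₁ :=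
  xv ⟨v₁ - l, by omega⟩ ^ k *
    ∏ t ∈ Finset.univ.filter (fun t : Fin (v₁ + 1) => (t : ℕ) < v₁ - l),
      (xv t / xv ⟨v₁ - l, by omega⟩)

/-- The partial symmetrization `𝔖_{{i},J}(f) = f + ∑_{j ∈ J} (i j)·f` for
`i = v₁+1-l` and `J = {v₁+2-l, …, v₁+1}` (in `1`-indexed paper notation). -/
noncomputable def sOp (v₁ : ℕ) (l : ℕ) (f : Fx v₁) : Fx v₁ :=
  f + ∑ j ∈ Finset.univ.filter (fun j : Fin (v₁ + 1) => v₁ + 1 - l ≤ (j : ℕ)),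
        pAct (Equiv.swap ⟨v₁ - l, by omega⟩ j) f

/-- The iterated convolution: `hIter v₁ k (l)` is the element `h_{l+1}` defined by
`h₁ = g₀` and `h_{l+1} = 𝔖_{{i},J}(h_l · g_l · ∏_{j ∈ J} (1 - q² x_j/x_i)/(1 - x_i/x_j))`
with `i = v₁+1-l`, `J = {v₁+2-l, …, v₁+1}` (paper `1`-indexed notation). -/
noncomputable def hIter (v₁ : ℕ) (k : ℤ) : ℕ → Fx v₁
  | 0 => gEl v₁ k 0
  | l + 1 =>
      sOp v₁ (l + 1)
        (hIter v₁ k l * gEl v₁ k (l + 1) *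
          ∏ j ∈ Finset.univ.filter (fun j : Fin (v₁ + 1) => v₁ - l ≤ (j : ℕ)),
            (1 - qx ^ 2 * xv j / xv ⟨v₁ - (l + 1), by omega⟩) /
              (1 - xv ⟨v₁ - (l + 1), by omega⟩ / xv j))

/-- The constants `ℂ` embedded in `ℂ(q)(x₁, …, x_{v₁+1})`. -/
noncomputable def cMap {v₁ : ℕ} : ℂ →+* Fx v₁ :=
  (algebraMap (MvPolynomial (Fin (v₁ + 1)) (RatFunc ℂ)) (Fx v₁)).comp
    (MvPolynomial.C.comp (algebraMap ℂ (RatFunc ℂ)))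

/-- The Laurent polynomial subring `ℂ[q^{±1}, x₁^{±1}, …, x_{v₁+1}^{±1}]`
inside `ℂ(q)(x₁, …, x_{v₁+1})`. -/
noncomputable def LaurentX (v₁ : ℕ) : Subring (Fx v₁) :=
  Subring.closure
    (Set.range cMap ∪ {qx, qx⁻¹} ∪ ⋃ i : Fin (v₁ + 1), {xv i, (xv i)⁻¹})



open Finset MvPolynomial
set_option synthInstance.maxHeartbeats 1000000
set_option maxHeartbeats 1000000

-- basic lemmas
lemma fx_alg_inj (v₁ : ℕ) :
    Function.Injective (algebraMap (MvPolynomial (Fin (v₁ + 1)) (RatFunc ℂ)) (Fx v₁)) :=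
  IsFractionRing.injective _ _

lemma xv_ne_zero {v₁ : ℕ} (i : Fin (v₁ + 1)) : (xv i : Fx v₁) ≠ 0 := by
  simp only [xv]
  rw [← map_zero (algebraMap (MvPolynomial (Fin (v₁ + 1)) (RatFunc ℂ)) (Fx v₁))]
  exact fun h => X_ne_zero i (fx_alg_inj v₁ h)

lemma xv_inj {v₁ : ℕ} {i j : Fin (v₁ + 1)} (h : (xv i : Fx v₁) = xv j) : i = j := by
  have := fx_alg_inj v₁ h
  exact X_injective this

lemma qx_ne_zero {v₁ : ℕ} : (qx : Fx v₁) ≠ 0 := by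
  simp only [qx]
  rw [← map_zero (algebraMap (MvPolynomial (Fin (v₁ + 1)) (RatFunc ℂ)) (Fx v₁))]
  intro h
  have := fx_alg_inj v₁ h
  rw [← map_zero (C : RatFunc ℂ →+* MvPolynomial (Fin (v₁ + 1)) (RatFunc ℂ))] at this
  have := C_injective _ _ this
  exact RatFunc.X_ne_zero this

lemma qx_pow_ne_one {v₁ : ℕ} {r : ℕ} (hr : r ≠ 0) : (qx : Fx v₁) ^ r ≠ 1 := by
  simp only [qx]
  rw [← map_pow, ← map_pow, ← map_one (algebraMap (MvPolynomial (Fin (v₁ + 1)) (RatFunc ℂ)) (Fx v₁))]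
  intro h
  have h2 := fx_alg_inj v₁ h
  rw [← map_one (C : RatFunc ℂ →+* MvPolynomial (Fin (v₁ + 1)) (RatFunc ℂ))] at h2
  have h3 := C_injective _ _ h2
  have h4 : (Polynomial.X : Polynomial ℂ) ^ r = 1 := by
    apply RatFunc.algebraMap_injective ℂ
    rw [map_pow, map_one]
    exact h3
  have := congrArg Polynomial.natDegree h4
  simp [Polynomial.natDegree_X_pow] at this
  exact hr this

lemma pAct_xv {v₁ : ℕ} (σ : Equiv.Perm (Fin (v₁ + 1))) (i : Fin (v₁ + 1)) :
    pAct σ (xv i) = xv (σ i) := by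
  simp only [pAct, xv]
  rw [IsFractionRing.ringEquivOfRingEquiv_algebraMap]
  congr 1
  simp [renameEquiv]

lemma pAct_qx {v₁ : ℕ} (σ : Equiv.Perm (Fin (v₁ + 1))) : pAct σ (qx : Fx v₁) = qx := by
  simp only [pAct, qx]
  rw [IsFractionRing.ringEquivOfRingEquiv_algebraMap]
  congr 1
  simp [renameEquiv]

lemma qx_sub_inv_ne_zero {v₁ : ℕ} : (qx : Fx v₁) - qx⁻¹ ≠ 0 := by
  intro h
  have h2 : (qx : Fx v₁) * qx - 1 = 0 := by
    have := congrArg (· * qx) h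
    simpa [sub_mul, inv_mul_cancel₀ (qx_ne_zero (v₁ := v₁))] using this
  have : (qx : Fx v₁) ^ 2 = 1 := by rw [pow_two]; linear_combination h2
  exact qx_pow_ne_one (by norm_num) this

lemma qx_sq_ne_one {v₁ : ℕ} : (qx : Fx v₁) ^ 2 ≠ 1 := qx_pow_ne_one (by norm_num)

lemma qInt_ne_zero {v₁ : ℕ} {r : ℕ} (hr : 1 ≤ r) : qInt v₁ r ≠ 0 := by
  apply div_ne_zero _ qx_sub_inv_ne_zero
  rw [sub_ne_zero]
  intro h
  have hq := qx_ne_zero (v₁ := v₁)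
  have h2 : (qx : Fx v₁) ^ (2 * r) = 1 := by
    have e1 : ((2 * r : ℕ) : ℤ) = (r : ℤ) + (r : ℤ) := by push_cast; ring
    calc (qx : Fx v₁) ^ (2 * r) = qx ^ (((2 * r : ℕ)) : ℤ) := (zpow_natCast _ _).symm
      _ = qx ^ ((r : ℤ) + (r : ℤ)) := by rw [e1]
      _ = qx ^ (r : ℤ) * qx ^ (r : ℤ) := zpow_add₀ hq _ _
      _ = qx ^ (r : ℤ) * qx ^ (-(r : ℤ)) := by nth_rewrite 2 [h]; rfl
      _ = qx ^ ((r : ℤ) + (-(r : ℤ))) := (zpow_add₀ hq _ _).symm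
      _ = 1 := by rw [add_neg_cancel, zpow_zero]
  exact qx_pow_ne_one (by omega) h2

lemma qFact_succ (v₁ : ℕ) (m : ℕ) : qFact v₁ (m + 1) = qFact v₁ m * qInt v₁ (m + 1) := by
  rw [qFact, qFact, Finset.prod_Icc_succ_top (by omega)]

lemma qFact_ne_zero (v₁ m : ℕ) : qFact v₁ m ≠ 0 := by
  rw [qFact]
  apply Finset.prod_ne_zero_iff.mpr
  intro r hr
  exact qInt_ne_zero (Finset.mem_Icc.mp hr).1

lemma qFact_one (v₁ : ℕ) : qFact v₁ 1 = 1 := by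
  rw [qFact]
  simp only [Finset.Icc_self, Finset.prod_singleton, qInt]
  rw [show ((1 : ℕ) : ℤ) = 1 from rfl, zpow_one, zpow_neg, zpow_one]
  exact div_self qx_sub_inv_ne_zero

-- the key scalar identity [n] * (-q)^(n-1) = (-1)^(n-1) * (1 - (q^2)^n)/(1 - q^2)
lemma qInt_identity (v₁ : ℕ) (n : ℕ) (hn : 1 ≤ n) :
    qInt v₁ n * (-qx) ^ (n - 1)
      = (-1) ^ (n - 1) * ((1 - (qx ^ 2) ^ n) / (1 - qx ^ 2)) := by
  have hq := qx_ne_zero (v₁ := v₁)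
  have hd := qx_sub_inv_ne_zero (v₁ := v₁)
  have hd2 : (1 : Fx v₁) - qx ^ 2 ≠ 0 := fun h =>
    qx_sq_ne_one (by linear_combination -h)
  rw [qInt, zpow_natCast, zpow_neg, zpow_natCast, neg_pow]
  have hqn : (qx : Fx v₁) ^ n ≠ 0 := pow_ne_zero _ hq
  have hsplit : (qx : Fx v₁) ^ n = qx ^ (n - 1) * qx := by
    rw [← pow_succ]; congr 1; omega
  have hqq : ((qx : Fx v₁) ^ 2) ^ n = (qx ^ n) * (qx ^ n) := by
    rw [← pow_mul, two_mul, pow_add]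
  have e1 : (qx : Fx v₁) ^ (n - 1) = qx ^ n * qx⁻¹ := by
    rw [hsplit, mul_assoc, mul_inv_cancel₀ hq, mul_one]
  have h1 : ((qx : Fx v₁) ^ n)⁻¹ * qx ^ n = 1 := inv_mul_cancel₀ hqn
  have h2 : (qx : Fx v₁)⁻¹ * qx = 1 := inv_mul_cancel₀ hq
  have key : ((qx : Fx v₁) ^ n - (qx ^ n)⁻¹) * qx ^ (n - 1) * (1 - qx ^ 2)
      = (1 - (qx ^ 2) ^ n) * (qx - qx⁻¹) := by
    rw [e1, hqq]
    linear_combination (-(qx⁻¹ : Fx v₁) * (1 - qx ^ 2)) * h1 +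
      (qx * (1 - (qx ^ n) * (qx ^ n))) * h2
  have S : ((qx : Fx v₁) ^ n - (qx ^ n)⁻¹) * qx ^ (n - 1) / (qx - qx⁻¹)
      = (1 - (qx ^ 2) ^ n) / (1 - qx ^ 2) := by
    rw [div_eq_div_iff hd hd2]
    exact key
  calc ((qx : Fx v₁) ^ n - (qx ^ n)⁻¹) / (qx - qx⁻¹) * ((-1) ^ (n - 1) * qx ^ (n - 1))
      = (-1) ^ (n - 1) * (((qx : Fx v₁) ^ n - (qx ^ n)⁻¹) * qx ^ (n - 1) / (qx - qx⁻¹)) := by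
        ring
    _ = (-1) ^ (n - 1) * ((1 - (qx ^ 2) ^ n) / (1 - qx ^ 2)) := by rw [S]

noncomputable def monX (v₁ : ℕ) (k : ℤ) (l : ℕ) : Fx v₁ :=
  ∏ t : Fin (v₁ + 1), (xv t) ^ (if (t : ℕ) < v₁ - l then ((l : ℤ) + 1) else k - ((v₁ : ℤ) - l))

lemma card_filter_lt (v₁ c : ℕ) (hc : c ≤ v₁ + 1) :
    (Finset.univ.filter fun t : Fin (v₁ + 1) => (t : ℕ) < c).card = c := by
  rcases Nat.lt_or_ge c (v₁ + 1) with h | h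
  · have : (Finset.univ.filter fun t : Fin (v₁ + 1) => (t : ℕ) < c)
        = Finset.Iio (⟨c, by omega⟩ : Fin (v₁ + 1)) := by
      ext t
      simp [Finset.mem_Iio, Fin.lt_def]
    rw [this, Fin.card_Iio]
  · have hc1 : c = v₁ + 1 := by omega
    subst hc1
    have : (Finset.univ.filter fun t : Fin (v₁ + 1) => (t : ℕ) < v₁ + 1)
        = Finset.univ := by
      ext t; simp [t.isLt]; have := t.isLt; omega
    rw [this]
    simp

lemma hIter_base (v₁ : ℕ) (k : ℤ) :
    hIter v₁ k 0 = qFact v₁ 1 * (-qx) ^ (0 * 1 / 2) * monX v₁ k 0 := by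
  rw [qFact_one, one_mul, show (0 * 1 / 2 : ℕ) = 0 from rfl, pow_zero, one_mul]
  rw [hIter, gEl, monX]
  have hi : (⟨v₁ - 0, by omega⟩ : Fin (v₁ + 1)) = ⟨v₁, by omega⟩ := by simp
  rw [hi]
  set i : Fin (v₁ + 1) := ⟨v₁, by omega⟩ with hidef
  have hxi := xv_ne_zero (v₁ := v₁) i
  rw [← Finset.prod_filter_mul_prod_filter_not Finset.univ
    (fun t : Fin (v₁ + 1) => (t : ℕ) < v₁ - 0)]
  have hsing : Finset.univ.filter (fun t : Fin (v₁ + 1) => ¬ (t : ℕ) < v₁ - 0)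
      = {i} := by
    ext t
    simp only [Finset.mem_filter, Finset.mem_univ, true_and, Finset.mem_singleton,
      Nat.sub_zero, not_lt, hidef]
    constructor
    · intro h; exact Fin.ext (by omega : (t : ℕ) = v₁)
    · intro h; subst h; simp
  rw [hsing, Finset.prod_singleton]
  have h2 : (if (i : ℕ) < v₁ - 0 then (((0 : ℕ) : ℤ) + 1) else k - ((v₁ : ℤ) - ((0 : ℕ) : ℤ)))
      = k - (v₁ : ℤ) := by
    rw [if_neg (by simp [hidef])]
    push_cast
    ring
  rw [h2]
  have hcongr : ∏ t ∈ Finset.univ.filter (fun t : Fin (v₁ + 1) => (t : ℕ) < v₁ - 0),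
      xv t ^ (if (t : ℕ) < v₁ - 0 then (((0 : ℕ) : ℤ) + 1) else k - ((v₁ : ℤ) - ((0 : ℕ) : ℤ)))
      = ∏ t ∈ Finset.univ.filter (fun t : Fin (v₁ + 1) => (t : ℕ) < v₁ - 0), xv t := by
    refine Finset.prod_congr rfl fun t ht => ?_
    rw [if_pos (Finset.mem_filter.mp ht).2]
    norm_num
  rw [hcongr, Finset.prod_div_distrib, Finset.prod_const,
    card_filter_lt v₁ (v₁ - 0) (by omega)]
  have hz : xv i ^ k / (xv i ^ (v₁ - 0) : Fx v₁) = xv i ^ (k - (v₁ : ℤ)) := by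
    rw [Nat.sub_zero, ← zpow_natCast (xv i) v₁, ← zpow_sub₀ hxi]
  calc xv i ^ k *
        ((∏ t ∈ Finset.univ.filter (fun t : Fin (v₁ + 1) => (t : ℕ) < v₁ - 0), xv t)
          / xv i ^ (v₁ - 0))
      = (∏ t ∈ Finset.univ.filter (fun t : Fin (v₁ + 1) => (t : ℕ) < v₁ - 0), xv t)
          * (xv i ^ k / xv i ^ (v₁ - 0)) := by ring
    _ = (∏ t ∈ Finset.univ.filter (fun t : Fin (v₁ + 1) => (t : ℕ) < v₁ - 0), xv t)
          * xv i ^ (k - (v₁ : ℤ)) := by rw [hz]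

lemma image_swap_of_mem {α : Type*} [DecidableEq α] (s : Finset α) {i j : α}
    (hi : i ∈ s) (hj : j ∈ s) : s.image (Equiv.swap i j) = s := by
  ext t
  rw [Finset.mem_image]
  constructor
  · rintro ⟨a, ha, rfl⟩
    rcases eq_or_ne a i with rfl | hai
    · rwa [Equiv.swap_apply_left]
    rcases eq_or_ne a j with rfl | haj
    · rwa [Equiv.swap_apply_right]
    · rwa [Equiv.swap_apply_of_ne_of_ne hai haj]
  · intro ht
    refine ⟨Equiv.swap i j t, ?_, Equiv.swap_apply_self _ _ _⟩
    rcases eq_or_ne t i with rfl | hti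
    · rwa [Equiv.swap_apply_left]
    rcases eq_or_ne t j with rfl | htj
    · rwa [Equiv.swap_apply_right]
    · rwa [Equiv.swap_apply_of_ne_of_ne hti htj]

lemma pAct_qInt {v₁ : ℕ} (σ : Equiv.Perm (Fin (v₁ + 1))) (r : ℕ) :
    pAct σ (qInt v₁ r) = qInt v₁ r := by
  rw [qInt, map_div₀, map_sub, map_zpow₀, map_zpow₀, map_sub, map_inv₀, pAct_qx]

lemma pAct_qFact {v₁ : ℕ} (σ : Equiv.Perm (Fin (v₁ + 1))) (m : ℕ) :
    pAct σ (qFact v₁ m) = qFact v₁ m := by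
  rw [qFact, map_prod]
  exact Finset.prod_congr rfl fun r _ => pAct_qInt σ r

lemma card_A (v₁ l : ℕ) (hl : l + 1 ≤ v₁) :
    (Finset.univ.filter fun t : Fin (v₁ + 1) => v₁ - (l + 1) ≤ (t : ℕ)).card = l + 2 := by
  have h := Finset.card_filter_add_card_filter_not
    (s := (Finset.univ : Finset (Fin (v₁ + 1))))
    (p := fun t : Fin (v₁ + 1) => (t : ℕ) < v₁ - (l + 1))
  have h2 := card_filter_lt v₁ (v₁ - (l + 1)) (by omega)
  have h3 : (Finset.univ.filter fun t : Fin (v₁ + 1) => ¬ (t : ℕ) < v₁ - (l + 1))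
      = Finset.univ.filter fun t : Fin (v₁ + 1) => v₁ - (l + 1) ≤ (t : ℕ) := by
    apply Finset.filter_congr
    intro t _
    simp [not_lt]
  rw [h3] at h
  have h4 : Fintype.card (Fin (v₁ + 1)) = v₁ + 1 := Fintype.card_fin _
  simp only [Finset.card_univ, h4] at h
  omega

lemma hmon (v₁ : ℕ) (k : ℤ) (l : ℕ) (hl1 : l + 1 ≤ v₁) :
    monX v₁ k l * gEl v₁ k (l + 1)
      = ((∏ t ∈ Finset.univ.filter (fun t : Fin (v₁ + 1) => (t : ℕ) < v₁ - (l + 1)),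
            xv t ^ ((l : ℤ) + 2)) *
          ∏ t ∈ Finset.univ.filter (fun t : Fin (v₁ + 1) => v₁ - (l + 1) ≤ (t : ℕ)),
            xv t ^ (k - ((v₁ : ℤ) - l))) *
        xv (⟨v₁ - (l + 1), by omega⟩ : Fin (v₁ + 1)) ^ (l + 2) := by
  set i : Fin (v₁ + 1) := ⟨v₁ - (l + 1), by omega⟩ with hidef
  set S := Finset.univ.filter (fun t : Fin (v₁ + 1) => (t : ℕ) < v₁ - (l + 1)) with hSdef
  set J := Finset.univ.filter (fun t : Fin (v₁ + 1) => v₁ - l ≤ (t : ℕ)) with hJdef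
  set A := Finset.univ.filter (fun t : Fin (v₁ + 1) => v₁ - (l + 1) ≤ (t : ℕ)) with hAdef
  have hiS : i ∉ S := by simp [hSdef, hidef]
  have hiJ : i ∉ J := by
    simp only [hJdef, Finset.mem_filter, Finset.mem_univ, true_and, hidef]
    omega
  have hA : A = insert i J := by
    ext t
    simp only [hAdef, hJdef, Finset.mem_filter, Finset.mem_univ, true_and,
      Finset.mem_insert, hidef, Fin.ext_iff]
    omega
  have hLt : Finset.univ.filter (fun t : Fin (v₁ + 1) => (t : ℕ) < v₁ - l)
      = insert i S := by
    ext t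
    simp only [hSdef, Finset.mem_filter, Finset.mem_univ, true_and,
      Finset.mem_insert, hidef, Fin.ext_iff]
    omega
  have hnotLt : Finset.univ.filter (fun t : Fin (v₁ + 1) => ¬ (t : ℕ) < v₁ - l) = J := by
    ext t
    simp only [hJdef, Finset.mem_filter, Finset.mem_univ, true_and, not_lt]
  have hxi : (xv i : Fx v₁) ≠ 0 := xv_ne_zero i
  -- expand monX
  rw [monX, ← Finset.prod_filter_mul_prod_filter_not Finset.univ
    (fun t : Fin (v₁ + 1) => (t : ℕ) < v₁ - l), hnotLt, hLt]
  have hm1 : ∏ t ∈ insert i S,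
      (xv t : Fx v₁) ^ (if (t : ℕ) < v₁ - l then ((l : ℤ) + 1) else k - ((v₁ : ℤ) - l))
      = xv i ^ ((l : ℤ) + 1) * ∏ t ∈ S, xv t ^ ((l : ℤ) + 1) := by
    rw [Finset.prod_insert hiS]
    congr 1
    · rw [if_pos]
      simp only [hidef]
      omega
    · refine Finset.prod_congr rfl fun t ht => ?_
      rw [if_pos]
      have := (Finset.mem_filter.mp ht).2
      omega
  have hm2 : ∏ t ∈ J,
      (xv t : Fx v₁) ^ (if (t : ℕ) < v₁ - l then ((l : ℤ) + 1) else k - ((v₁ : ℤ) - l))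
      = ∏ t ∈ J, xv t ^ (k - ((v₁ : ℤ) - l)) := by
    refine Finset.prod_congr rfl fun t ht => ?_
    rw [if_neg]
    have := (Finset.mem_filter.mp ht).2
    omega
  rw [hm1, hm2, gEl]
  rw [Finset.prod_div_distrib, Finset.prod_const, card_filter_lt v₁ (v₁ - (l + 1)) (by omega)]
  -- now pure rearrangement
  have hS2 : (∏ t ∈ S, (xv t : Fx v₁) ^ ((l : ℤ) + 1)) * (∏ t ∈ S, xv t)
      = ∏ t ∈ S, xv t ^ ((l : ℤ) + 2) := by
    rw [← Finset.prod_mul_distrib]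
    refine Finset.prod_congr rfl fun t ht => ?_
    rw [← zpow_add_one₀ (xv_ne_zero t)]
    congr 1
  have hI2 : (xv i : Fx v₁) ^ ((l : ℤ) + 1) * (xv i ^ k / xv i ^ (v₁ - (l + 1)))
      = xv i ^ (k - ((v₁ : ℤ) - l)) * xv i ^ (l + 2) := by
    rw [div_eq_mul_inv, ← zpow_natCast (xv i) (v₁ - (l + 1)), ← zpow_natCast (xv i) (l + 2),
      ← zpow_neg, ← zpow_add₀ hxi, ← zpow_add₀ hxi, ← zpow_add₀ hxi]
    congr 1
    omega
  have hA2 : ∏ t ∈ A, (xv t : Fx v₁) ^ (k - ((v₁ : ℤ) - l))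
      = xv i ^ (k - ((v₁ : ℤ) - l)) * ∏ t ∈ J, xv t ^ (k - ((v₁ : ℤ) - l)) := by
    rw [hA, Finset.prod_insert hiJ]
  rw [hA2]
  calc (xv i ^ ((l : ℤ) + 1) * ∏ t ∈ S, xv t ^ ((l : ℤ) + 1)) *
        (∏ t ∈ J, xv t ^ (k - ((v₁ : ℤ) - l))) *
        (xv i ^ k * ((∏ t ∈ S, xv t) / xv i ^ (v₁ - (l + 1))))
      = ((∏ t ∈ S, xv t ^ ((l : ℤ) + 1)) * (∏ t ∈ S, xv t)) *
        (∏ t ∈ J, xv t ^ (k - ((v₁ : ℤ) - l))) *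
        (xv i ^ ((l : ℤ) + 1) * (xv i ^ k / xv i ^ (v₁ - (l + 1)))) := by
        ring
    _ = (∏ t ∈ S, xv t ^ ((l : ℤ) + 2)) *
        (∏ t ∈ J, xv t ^ (k - ((v₁ : ℤ) - l))) *
        (xv i ^ (k - ((v₁ : ℤ) - l)) * xv i ^ (l + 2)) := by
        rw [hS2, hI2]
    _ = (∏ t ∈ S, xv t ^ ((l : ℤ) + 2)) *
        (xv i ^ (k - ((v₁ : ℤ) - l)) * ∏ t ∈ J, xv t ^ (k - ((v₁ : ℤ) - l))) *
        xv i ^ (l + 2) := by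
        ring

lemma hIter_closed (v₁ : ℕ) (k : ℤ) (l : ℕ) (hl : l ≤ v₁) :
    hIter v₁ k l = qFact v₁ (l + 1) * (-qx) ^ (l * (l + 1) / 2) * monX v₁ k l := by
  induction l with
  | zero => exact hIter_base v₁ k
  | succ l ih =>
    have hl1 : l + 1 ≤ v₁ := hl
    have IH := ih (by omega)
    set i : Fin (v₁ + 1) := ⟨v₁ - (l + 1), by omega⟩ with hidef
    set S := Finset.univ.filter (fun t : Fin (v₁ + 1) => (t : ℕ) < v₁ - (l + 1)) with hSdef
    set J := Finset.univ.filter (fun t : Fin (v₁ + 1) => v₁ - l ≤ (t : ℕ)) with hJdef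
    set A := Finset.univ.filter (fun t : Fin (v₁ + 1) => v₁ - (l + 1) ≤ (t : ℕ)) with hAdef
    have hiA : i ∈ A := by
      refine Finset.mem_filter.mpr ⟨Finset.mem_univ _, ?_⟩
      exact le_rfl
    have hJA : J = A.erase i := by
      ext t
      constructor
      · intro ht
        have h2 : v₁ - l ≤ (t : ℕ) := (Finset.mem_filter.mp ht).2
        refine Finset.mem_erase.mpr ⟨?_, ?_⟩
        · intro h
          rw [h] at h2
          have h3 : v₁ - l ≤ v₁ - (l + 1) := h2
          omega
        · exact Finset.mem_filter.mpr ⟨Finset.mem_univ _, by omega⟩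
      · intro ht
        obtain ⟨hne, hA'⟩ := Finset.mem_erase.mp ht
        have h2 : v₁ - (l + 1) ≤ (t : ℕ) := (Finset.mem_filter.mp hA').2
        refine Finset.mem_filter.mpr ⟨Finset.mem_univ _, ?_⟩
        rcases Nat.lt_or_ge (t : ℕ) (v₁ - l) with hlt | hge
        · exact absurd (Fin.ext (show (t : ℕ) = v₁ - (l + 1) by omega)) hne
        · exact hge
    have hcardA : A.card = l + 2 := card_A v₁ l hl1
    have hinjA : Set.InjOn xv (A : Set (Fin (v₁ + 1))) := fun a _ b _ h => xv_inj h
    have h0A : ∀ t ∈ A, (xv t : Fx v₁) ≠ 0 := fun t _ => xv_ne_zero t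
    have hAne : A.Nonempty := ⟨i, hiA⟩
    set W : Fin (v₁ + 1) → Fx v₁ := fun s =>
      xv s ^ A.card * ∏ j ∈ A.erase s, ((1 - qx ^ 2 * xv j / xv s) / (1 - xv s / xv j))
      with hWdef
    set D : Fx v₁ := (∏ t ∈ S, xv t ^ ((l : ℤ) + 2)) *
      ∏ t ∈ A, xv t ^ (k - ((v₁ : ℤ) - l)) with hDdef
    set Cl : Fx v₁ := qFact v₁ (l + 1) * (-qx) ^ (l * (l + 1) / 2) with hCldef
    have hinner : hIter v₁ k l * gEl v₁ k (l + 1) *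
        (∏ j ∈ J, (1 - qx ^ 2 * xv j / xv i) / (1 - xv i / xv j))
        = Cl * (D * W i) := by
      rw [IH, hWdef]
      have := hmon v₁ k l hl1
      rw [← hSdef, ← hAdef, ← hidef] at this
      calc qFact v₁ (l + 1) * (-qx) ^ (l * (l + 1) / 2) * monX v₁ k l * gEl v₁ k (l + 1) *
            (∏ j ∈ J, (1 - qx ^ 2 * xv j / xv i) / (1 - xv i / xv j))
          = Cl * ((monX v₁ k l * gEl v₁ k (l + 1)) *
              ∏ j ∈ J, (1 - qx ^ 2 * xv j / xv i) / (1 - xv i / xv j)) := by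
            rw [hCldef]; ring
        _ = Cl * (D * (xv i ^ (l + 2) *
              ∏ j ∈ J, (1 - qx ^ 2 * xv j / xv i) / (1 - xv i / xv j))) := by
            rw [this, hDdef]; ring
        _ = Cl * (D * (xv i ^ A.card *
              ∏ j ∈ A.erase i, (1 - qx ^ 2 * xv j / xv i) / (1 - xv i / xv j))) := by
            rw [hcardA, hJA]
    have hswap : ∀ j ∈ J, pAct (Equiv.swap i j) (Cl * (D * W i)) = Cl * (D * W j) := by
      intro j hj
      have hjJ : v₁ - l ≤ (j : ℕ) := (Finset.mem_filter.mp hj).2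
      have hjA : j ∈ A := Finset.mem_filter.mpr ⟨Finset.mem_univ _, by omega⟩
      have hji : j ≠ i := by
        intro h
        rw [h] at hjJ
        have h3 : v₁ - l ≤ v₁ - (l + 1) := hjJ
        omega
      set σ := Equiv.swap i j with hσdef
      have hσi : σ i = j := Equiv.swap_apply_left i j
      have hfix : ∀ t ∈ S, σ t = t := by
        intro t ht
        have htS : (t : ℕ) < v₁ - (l + 1) := (Finset.mem_filter.mp ht).2
        apply Equiv.swap_apply_of_ne_of_ne
        · intro h
          have h3 : (t : ℕ) = v₁ - (l + 1) := congrArg Fin.val h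
          omega
        · intro h
          subst h
          omega
      have hCl : pAct σ Cl = Cl := by
        rw [hCldef, map_mul, pAct_qFact, map_pow, map_neg, pAct_qx]
      have hD : pAct σ D = D := by
        rw [hDdef, map_mul, map_prod, map_prod]
        congr 1
        · refine Finset.prod_congr rfl fun t ht => ?_
          rw [map_zpow₀, pAct_xv, hfix t ht]
        · have h1 : ∀ t ∈ A, pAct σ (xv t ^ (k - ((v₁ : ℤ) - l)))
              = xv (σ t) ^ (k - ((v₁ : ℤ) - l)) := by
            intro t _
            rw [map_zpow₀, pAct_xv]
          rw [Finset.prod_congr rfl h1]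
          rw [show (∏ x ∈ A, (xv (σ x) : Fx v₁) ^ (k - ((v₁ : ℤ) - l)))
              = ∏ x ∈ A.image σ, xv x ^ (k - ((v₁ : ℤ) - l)) from
            (Finset.prod_image (f := fun u => (xv u : Fx v₁) ^ (k - ((v₁ : ℤ) - l)))
              (g := ⇑σ) (fun x _ y _ h => σ.injective h)).symm]
          rw [image_swap_of_mem A hiA hjA]
      have hW : pAct σ (W i) = W j := by
        rw [hWdef]
        simp only
        rw [map_mul, map_pow, pAct_xv, hσi, map_prod]
        congr 1
        have h1 : ∀ t ∈ A.erase i,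
            pAct σ ((1 - qx ^ 2 * xv t / xv i) / (1 - xv i / xv t))
              = (1 - qx ^ 2 * xv (σ t) / xv j) / (1 - xv j / xv (σ t)) := by
          intro t _
          simp only [map_div₀, map_sub, map_one, map_mul, map_pow, pAct_qx, pAct_xv, hσi]
        rw [Finset.prod_congr rfl h1]
        rw [show (∏ x ∈ A.erase i, (1 - qx ^ 2 * xv (σ x) / xv j) / (1 - xv j / xv (σ x)))
            = ∏ x ∈ (A.erase i).image σ, (1 - qx ^ 2 * xv x / xv j) / (1 - xv j / xv x) from
          (Finset.prod_image (f := fun u => (1 - qx ^ 2 * xv u / xv j) / (1 - xv j / xv u))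
            (g := ⇑σ) (fun x _ y _ h => σ.injective h)).symm]
        rw [Finset.image_erase σ.injective, image_swap_of_mem A hiA hjA, hσi]
      rw [map_mul, hCl, map_mul, hD, hW]
    -- assemble
    have hstep : hIter v₁ k (l + 1) = Cl * D * ∑ s ∈ A, W s := by
      rw [hIter, sOp]
      have hJJ : Finset.univ.filter (fun j : Fin (v₁ + 1) => v₁ + 1 - (l + 1) ≤ (j : ℕ)) = J := by
        ext t
        simp only [hJdef, Finset.mem_filter, Finset.mem_univ, true_and]
        omega
      rw [hJJ]
      rw [hinner]
      rw [Finset.sum_congr rfl hswap]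
      rw [hJA]
      have := Finset.add_sum_erase A (fun s => Cl * (D * W s)) hiA
      rw [this]
      rw [← Finset.mul_sum, ← Finset.mul_sum, hCldef]
      ring
    rw [hstep]
    have hconv : ∑ s ∈ A, W s
        = (-1) ^ (A.card - 1) * (∏ j ∈ A, xv j) *
            ((1 - (qx ^ 2) ^ A.card) / (1 - qx ^ 2)) := by
      rw [hWdef]
      exact GenAux.conv_sum A xv hinjA h0A (qx ^ 2) qx_sq_ne_one hAne
    rw [hconv, hcardA]
    -- final monomial and scalar bookkeeping
    have hmon2 : D * ∏ t ∈ A, xv t = monX v₁ k (l + 1) := by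
      rw [monX, ← Finset.prod_filter_mul_prod_filter_not Finset.univ
        (fun t : Fin (v₁ + 1) => (t : ℕ) < v₁ - (l + 1))]
      have hnot : Finset.univ.filter (fun t : Fin (v₁ + 1) => ¬ (t : ℕ) < v₁ - (l + 1)) = A := by
        ext t
        simp only [hAdef, Finset.mem_filter, Finset.mem_univ, true_and, not_lt]
      rw [hnot]
      have hp1 : ∏ t ∈ Finset.univ.filter (fun t : Fin (v₁ + 1) => (t : ℕ) < v₁ - (l + 1)),
          (xv t : Fx v₁) ^ (if (t : ℕ) < v₁ - (l + 1) then (((l + 1 : ℕ) : ℤ) + 1)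
            else k - ((v₁ : ℤ) - ((l + 1 : ℕ) : ℤ)))
          = ∏ t ∈ S, xv t ^ ((l : ℤ) + 2) := by
        rw [← hSdef]
        refine Finset.prod_congr rfl fun t ht => ?_
        rw [if_pos (Finset.mem_filter.mp ht).2]
        congr 1
        all_goals (push_cast; ring)
      have hp2 : ∏ t ∈ A,
          (xv t : Fx v₁) ^ (if (t : ℕ) < v₁ - (l + 1) then (((l + 1 : ℕ) : ℤ) + 1)
            else k - ((v₁ : ℤ) - ((l + 1 : ℕ) : ℤ)))
          = ∏ t ∈ A, (xv t ^ (k - ((v₁ : ℤ) - l)) * xv t) := by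
        refine Finset.prod_congr rfl fun t ht => ?_
        have htA : v₁ - (l + 1) ≤ (t : ℕ) := (Finset.mem_filter.mp ht).2
        rw [if_neg (by omega)]
        rw [← zpow_add_one₀ (xv_ne_zero t)]
        congr 1
        push_cast [hl1]
        omega
      rw [hp1, hp2, Finset.prod_mul_distrib, hDdef, mul_assoc]
    have hq2 := qInt_identity v₁ (l + 2) (by omega)
    have he : (l + 2 - 1) = l + 1 := by omega
    rw [he] at hq2
    have hpow : (l + 1) * (l + 1 + 1) / 2 = l * (l + 1) / 2 + (l + 1) := by
      have hexp : (l + 1) * (l + 1 + 1) = l * (l + 1) + 2 * (l + 1) := by ring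
      obtain ⟨a, ha⟩ := Nat.even_mul_succ_self l
      omega
    have hsc : qFact v₁ (l + 2) * (-qx : Fx v₁) ^ ((l + 1) * (l + 1 + 1) / 2)
        = Cl * ((-1 : Fx v₁) ^ (l + 2 - 1) * ((1 - (qx ^ 2) ^ (l + 2)) / (1 - qx ^ 2))) := by
      rw [he, hpow, pow_add, qFact_succ, ← hq2, hCldef]
      ring
    calc Cl * D * ((-1) ^ (l + 2 - 1) * (∏ j ∈ A, xv j) *
          ((1 - (qx ^ 2) ^ (l + 2)) / (1 - qx ^ 2)))
        = (Cl * ((-1 : Fx v₁) ^ (l + 2 - 1) * ((1 - (qx ^ 2) ^ (l + 2)) / (1 - qx ^ 2)))) *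
            (D * ∏ j ∈ A, xv j) := by ring
      _ = qFact v₁ (l + 2) * (-qx) ^ ((l + 1) * (l + 1 + 1) / 2) * monX v₁ k (l + 1) := by
          rw [hmon2, ← hsc]

lemma zpow_mem' {K : Type*} [Field K] {S : Subring K} {x : K} (hx : x ∈ S)
    (hxi : x⁻¹ ∈ S) : ∀ e : ℤ, x ^ e ∈ S
  | (n : ℕ) => by rw [zpow_natCast]; exact S.pow_mem hx n
  | Int.negSucc n => by
      rw [zpow_negSucc, ← inv_pow]
      exact S.pow_mem hxi (n + 1)

lemma qx_mem (v₁ : ℕ) : (qx : Fx v₁) ∈ LaurentX v₁ :=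
  Subring.subset_closure (Set.mem_union_left _ (Set.mem_union_right _ (by simp)))

lemma qx_inv_mem (v₁ : ℕ) : (qx : Fx v₁)⁻¹ ∈ LaurentX v₁ :=
  Subring.subset_closure (Set.mem_union_left _ (Set.mem_union_right _ (by simp)))

lemma xv_mem (v₁ : ℕ) (i : Fin (v₁ + 1)) : (xv i : Fx v₁) ∈ LaurentX v₁ :=
  Subring.subset_closure (Set.mem_union_right _ (Set.mem_iUnion.mpr ⟨i, by simp⟩))

lemma xv_inv_mem (v₁ : ℕ) (i : Fin (v₁ + 1)) : (xv i : Fx v₁)⁻¹ ∈ LaurentX v₁ :=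
  Subring.subset_closure (Set.mem_union_right _ (Set.mem_iUnion.mpr ⟨i, by simp⟩))

lemma monX_mem (v₁ : ℕ) (k : ℤ) (l : ℕ) : monX v₁ k l ∈ LaurentX v₁ := by
  rw [monX]
  exact Subring.prod_mem _ fun t _ => zpow_mem' (xv_mem v₁ t) (xv_inv_mem v₁ t) _

lemma monX_inv_mem (v₁ : ℕ) (k : ℤ) (l : ℕ) : (monX v₁ k l)⁻¹ ∈ LaurentX v₁ := by
  rw [monX, ← Finset.prod_inv_distrib]
  refine Subring.prod_mem _ fun t _ => ?_
  rw [← zpow_neg]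
  exact zpow_mem' (xv_mem v₁ t) (xv_inv_mem v₁ t) _

lemma neg_qx_pow_mem (v₁ N : ℕ) : ((-qx : Fx v₁)) ^ N ∈ LaurentX v₁ :=
  Subring.pow_mem _ (Subring.neg_mem _ (qx_mem v₁)) N

lemma neg_qx_pow_inv_mem (v₁ N : ℕ) : ((-qx : Fx v₁) ^ N)⁻¹ ∈ LaurentX v₁ := by
  rw [← inv_pow, inv_neg]
  exact Subring.pow_mem _ (Subring.neg_mem _ (qx_inv_mem v₁)) N


set_option synthInstance.maxHeartbeats 1000000 in
/-- Lemma 1 of the paper: the iterated convolution `h_m`, divided by the quantum factorial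
`[m]!`, is a unit of the Laurent polynomial ring `ℂ[q^{±1}, x₁^{±1}, …, x_{v₁+1}^{±1}]`;
in particular `[m]!` divides `h_m` in that ring. -/
theorem divided_power_image_is_integral (v₁ : ℕ) (k : ℤ) (m : ℕ) (hm1 : 1 ≤ m)
    (hm : m ≤ v₁ + 1) :
    (qFact v₁ m)⁻¹ * hIter v₁ k (m - 1) ∈ LaurentX v₁ ∧
    ((qFact v₁ m)⁻¹ * hIter v₁ k (m - 1))⁻¹ ∈ LaurentX v₁ ∧
    ∃ c ∈ LaurentX v₁, hIter v₁ k (m - 1) = qFact v₁ m * c := by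
  have hm0 : m - 1 + 1 = m := by omega
  have hcl := hIter_closed v₁ k (m - 1) (by omega)
  rw [hm0] at hcl
  set N := (m - 1) * m / 2 with hNdef
  set u : Fx v₁ := (-qx) ^ N * monX v₁ k (m - 1) with hudef
  have hcl' : hIter v₁ k (m - 1) = qFact v₁ m * u := by
    rw [hcl, hudef, mul_assoc]
  have hu_mem : u ∈ LaurentX v₁ :=
    Subring.mul_mem _ (neg_qx_pow_mem v₁ N) (monX_mem v₁ k (m - 1))
  have huinv_mem : u⁻¹ ∈ LaurentX v₁ := by
    rw [hudef, mul_inv]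
    exact Subring.mul_mem _ (neg_qx_pow_inv_mem v₁ N) (monX_inv_mem v₁ k (m - 1))
  have hg1 : (qFact v₁ m)⁻¹ * hIter v₁ k (m - 1) = u := by
    rw [hcl', inv_mul_cancel_left₀ (qFact_ne_zero v₁ m)]
  exact ⟨hg1 ▸ hu_mem, hg1 ▸ huinv_mem, u, hu_mem, hcl'⟩
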